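/- arXiv:1601.01011 — 9 statements merged into one kernel-verified Lean document; each statement's English description precedes it below -/
import Mathlib

section
/- Let L₁, L₂ be complete lattices, q : L₂ → L₁ a surjective map preserving all infima, and m : L₁ → L₂ an injective map preserving all suprema, forming a Galois connection/adjunction with m(q(y)) ≤ y and q(m(x)) = x for all x ∈ L₁, y ∈ L₂. Assume further that q⁻¹(⊥₁) = {⊥₂}, where ⊥ᵢ is the bottom of Lᵢ. Then m maps the set of atoms of L₁ bijectively onto the set of atoms of L₂, i.e., m(Atoms(L₁)) = Atoms(L₂). -/
/-- Given an adjunction `q : L₂ → L₁`, `m : L₁ → L₂` between complete lattices with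
`q` surjective and inf-preserving, `m` injective and sup-preserving, `q ∘ m = id`,
`m ∘ q ≤ id`, and such that the only preimage of `⊥₁` under `q` is `⊥₂`, the map `m`
carries the atoms of `L₁` bijectively onto the atoms of `L₂`. -/
theorem atoms_image_eq_atoms {L₁ L₂ : Type*} [CompleteLattice L₁] [CompleteLattice L₂]
    (q : L₂ → L₁) (m : L₁ → L₂)
    (hq_surj : Function.Surjective q)
    (hq_inf : ∀ S : Set L₂, q (sInf S) = sInf (q '' S))
    (hm_inj : Function.Injective m)
    (hm_sup : ∀ S : Set L₁, m (sSup S) = sSup (m '' S))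
    (hmq : ∀ y : L₂, m (q y) ≤ y)
    (hqm : ∀ x : L₁, q (m x) = x)
    (hbot : q ⁻¹' {⊥} = {⊥}) :
    m '' {a : L₁ | IsAtom a} = {b : L₂ | IsAtom b} := by
  have hqbot : q ⊥ = ⊥ := by
    have : (⊥ : L₂) ∈ q ⁻¹' {⊥} := by rw [hbot]; rfl
    simpa using this
  have hbot' : ∀ y : L₂, q y = ⊥ → y = ⊥ := by
    intro y hy
    have : y ∈ q ⁻¹' {⊥} := hy
    rw [hbot] at this
    simpa using this
  have hq_mono : Monotone q := by
    intro y y' h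
    have h1 : sInf {y, y'} = y := by
      rw [sInf_pair]; exact inf_eq_left.mpr h
    have h2 := hq_inf {y, y'}
    rw [h1, Set.image_pair, sInf_pair] at h2
    rw [h2]; exact inf_le_right
  have hm_mono : Monotone m := by
    intro x x' h
    have h1 : sSup {x, x'} = x' := by
      rw [sSup_pair]; exact sup_eq_right.mpr h
    have h2 := hm_sup {x, x'}
    rw [h1, Set.image_pair, sSup_pair] at h2
    rw [h2]; exact le_sup_left
  have hmbot : m ⊥ = ⊥ := by
    have := hm_sup ∅
    simpa using this
  ext b
  constructor
  · rintro ⟨a, ha, rfl⟩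
    constructor
    · intro h
      apply ha.1
      have : q (m a) = ⊥ := by rw [h, hqbot]
      rwa [hqm] at this
    · intro c hc
      have hq : q c ≤ a := by
        have := hq_mono hc.le
        rwa [hqm] at this
      rcases eq_or_lt_of_le hq with h | h
      · exfalso
        have : m a ≤ c := by
          have := hmq c
          rwa [h] at this
        exact absurd (lt_of_lt_of_le hc this) (lt_irrefl _)
      · have : q c = ⊥ := ha.2 _ h
        exact hbot' _ this
  · intro hb
    refine ⟨q b, ?_, ?_⟩
    · constructor
      · intro h
        exact hb.1 (hbot' _ h)
      · intro x hx
        have hmx : m x ≤ b := le_trans (hm_mono hx.le) (hmq b)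
        rcases eq_or_lt_of_le hmx with h | h
        · exfalso
          have : x = q b := by rw [← hqm x, h]
          exact absurd this hx.ne
        · have : m x = ⊥ := hb.2 _ h
          have := congrArg q this
          rwa [hqm, hqbot] at this
    · have h1 : m (q b) ≤ b := hmq b
      rcases eq_or_lt_of_le h1 with h | h
      · exact h
      · exfalso
        have : m (q b) = ⊥ := hb.2 _ h
        have h2 := congrArg q this
        rw [hqm, hqbot] at h2
        exact hb.1 (hbot' _ h2)
end

section
/- Let L₁, L₂ be complete lattices with an adjunction as above (q surjective preserving infima, m injective preserving suprema, q∘m = id on L₁, m∘q ≤ id on L₂) satisfying q⁻¹(⊥₁) = {⊥₂}. Then Atoms(L₁) = q(Atoms(L₂)). -/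
/-- Under the same adjunction hypotheses, the atoms of `L₁` are exactly the images
under `q` of the atoms of `L₂`. -/
theorem atoms_eq_q_image_atoms {L₁ L₂ : Type*} [CompleteLattice L₁] [CompleteLattice L₂]
    (q : L₂ → L₁) (m : L₁ → L₂)
    (hq_surj : Function.Surjective q)
    (hq_inf : ∀ S : Set L₂, q (sInf S) = sInf (q '' S))
    (hm_inj : Function.Injective m)
    (hm_sup : ∀ S : Set L₁, m (sSup S) = sSup (m '' S))
    (hmq : ∀ y : L₂, m (q y) ≤ y)
    (hqm : ∀ x : L₁, q (m x) = x)
    (hbot : q ⁻¹' {⊥} = {⊥}) :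
    {a : L₁ | IsAtom a} = q '' {b : L₂ | IsAtom b} := by
  have hbot' : ∀ y : L₂, q y = ⊥ → y = ⊥ := by
    intro y hy
    have : y ∈ q ⁻¹' {⊥} := hy
    rwa [hbot] at this
  have hqbot : q ⊥ = ⊥ := by
    have : (⊥ : L₂) ∈ q ⁻¹' {⊥} := by rw [hbot]; rfl
    simpa using this
  have hm_mono : Monotone m := by
    intro x₁ x₂ h
    have h1 : m (sSup {x₁, x₂}) = sSup (m '' {x₁, x₂}) := hm_sup _
    have h2 : (x₁ ⊔ x₂ : L₁) = x₂ := sup_eq_right.mpr h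
    simp only [sSup_pair, Set.image_pair, h2] at h1
    rw [h1]
    exact le_sup_left
  have hq_mono : Monotone q := by
    intro y₁ y₂ h
    have h1 : q (sInf {y₁, y₂}) = sInf (q '' {y₁, y₂}) := hq_inf _
    have h2 : (y₁ ⊓ y₂ : L₂) = y₁ := inf_eq_left.mpr h
    simp only [sInf_pair, Set.image_pair, h2] at h1
    rw [h1]
    exact inf_le_right
  ext a
  simp only [Set.mem_setOf_eq, Set.mem_image]
  constructor
  · intro ha
    refine ⟨m a, ⟨?_, ?_⟩, hqm a⟩
    · intro h
      apply ha.1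
      rw [← hqm a, h, hqbot]
    · intro c hc
      by_contra hc0
      have hqc : q c ≠ ⊥ := fun h => hc0 (hbot' c h)
      have hle : q c ≤ a := by
        rw [← hqm a]; exact hq_mono hc.le
      rcases lt_or_eq_of_le hle with hlt | heq
      · exact hqc (ha.2 _ hlt)
      · have : m a ≤ c := by
          calc m a = m (q c) := by rw [heq]
          _ ≤ c := hmq c
        exact absurd this (not_le_of_gt hc)
  · rintro ⟨b, hb, rfl⟩
    constructor
    · exact fun h => hb.1 (hbot' b h)
    · intro x hx
      by_contra hx0
      have hmx : m x ≠ ⊥ := fun h => hx0 (by rw [← hqm x, h, hqbot])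
      have hle : m x ≤ b := le_trans (hm_mono hx.le) (hmq b)
      rcases lt_or_eq_of_le hle with hlt | heq
      · exact hmx (hb.2 _ hlt)
      · apply hx.ne
        rw [← hqm x, heq]
end

section
/- In any semigroup satisfying the identity xyx = xyy (for all x, y), the identity xyz² = xyz⁴ holds for all x, y, z. -/
/-- In any semigroup satisfying `xyx = xyy`, the identity `xyz² = xyz⁴` holds. -/
theorem xyzsq_eq_xyz4 {S : Type*} [Semigroup S]
    (h : ∀ x y : S, x * y * x = x * y * y) (x y z : S) :
    x * y * z * z = x * y * z * z * z * z := by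
  calc x * y * z * z
      = x * y * z * (x * y) := (h (x * y) z).symm
    _ = x * (y * z) * x * y := by simp only [mul_assoc]
    _ = x * (y * z) * (y * z) * y := by rw [h x (y * z)]
    _ = x * y * (z * (y * z * y)) := by simp only [mul_assoc]
    _ = x * y * (z * (y * z * z)) := by rw [h y z]
    _ = x * (y * z * y) * (z * z) := by simp only [mul_assoc]
    _ = x * (y * z * z) * (z * z) := by rw [h y z]
    _ = x * y * z * z * z * z := by simp only [mul_assoc]
end

section
/- In any semigroup satisfying the identity xyx = xyy (for all x, y), the identity x²y² = x²y³ holds for all x, y. -/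
/-- In any semigroup satisfying `xyx = xyy`, the identity `x²y² = x²y³` holds. -/
theorem sq_sq_eq_sq_cube {S : Type*} [Semigroup S]
    (h : ∀ x y : S, x * y * x = x * y * y) (x y : S) :
    x * x * y * y = x * x * y * y * y := by
  have h1 := h (x*y) x
  have h2 := h (x*x) y
  have key : x*x*y*y*y = x*x*y*y := by
    calc x*x*y*y*y = x*x*y*(x*x)*y := by rw [h2]
      _ = x*(x*y*x*(x*y)) := by simp only [mul_assoc]
      _ = x*(x*y*x*x) := by rw [h1]
      _ = x*x*y*(x*x) := by simp only [mul_assoc]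
      _ = x*x*y*y := h2
  exact key.symm
end

section
/- In any semigroup satisfying the identity xyx = yxy (for all x, y), the identity xyzx = y·xyzx·y holds for all x, y, z (i.e., abca = b(abca)b). -/
/-- In any semigroup satisfying `xyx = yxy`, one has `xyzx = y(xyzx)y`. -/
theorem inside_out {S : Type*} [Semigroup S]
    (h : ∀ x y : S, x * y * x = y * x * y) (x y z : S) :
    x * y * z * x = y * (x * y * z * x) * y := by
  calc x * y * z * x = x * (y * z) * x := by rw [mul_assoc x y z]
    _ = (y * z) * x * (y * z) := h x (y * z)
    _ = y * (z * (x * y) * z) := by simp [mul_assoc]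
    _ = y * ((x * y) * z * (x * y)) := by rw [h z (x * y)]
    _ = y * (x * y * z * x) * y := by simp [mul_assoc]
end

section
/- In any semigroup satisfying the identity xyx = yxy (for all x, y), the identity xyzx = xyxzx holds for all x, y, z. -/
/-- In any semigroup satisfying `xyx = yxy`, the identity `xyzx = xyxzx` holds. -/
theorem outside_in {S : Type*} [Semigroup S]
    (h : ∀ x y : S, x * y * x = y * x * y) (x y z : S) :
    x * y * z * x = x * y * x * z * x := by
  have s0 : x * (y * (z * x)) = y * (z * (x * (y * z))) := by
    simpa only [mul_assoc] using h x (y * z)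
  have s1 : y * (z * (x * (y * z))) = y * (x * (y * (z * (x * y)))) := by
    simpa only [mul_assoc] using congrArg (fun w => y * w) (h z (x * y))
  have s2 : y * (x * (y * (z * (x * y)))) = y * (x * (z * (x * (y * (z * x))))) := by
    simpa only [mul_assoc] using congrArg (fun w => (y * x) * w) (h y (z * x))
  have s3 : y * (x * (z * (x * (y * (z * x))))) = x * (z * (x * (y * (x * (z * (x * (z * x))))))) := by
    simpa only [mul_assoc] using congrArg (fun w => w * (z * x)) (h y (x * z * x))
  have s4 : x * (z * (x * (y * (x * (z * (x * (z * x))))))) = x * (y * (x * (z * (x * (z * (x * (y * (x * (z * x))))))))) := by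
    simpa only [mul_assoc] using congrArg (fun w => x * w) (h (z * x) (y * x * z * x))
  have s5 : x * (y * (x * (z * (x * (z * (x * (y * (x * (z * x))))))))) = z * (x * (y * (x * (z * (x * z))))) := by
    simpa only [mul_assoc] using h (x * y * x * z * x) z
  have s6 : z * (x * (y * (x * (z * (x * z))))) = y * (x * (z * (x * (y * (x * z))))) := by
    simpa only [mul_assoc] using congrArg (fun w => w * z) (h (z * x) (y * x))
  have s7 : y * (x * (z * (x * (y * (x * z))))) = x * (y * (x * (z * x))) := by
    simpa only [mul_assoc] using h (y * x * z) x
  calc x * y * z * x = x * (y * (z * x)) := by simp only [mul_assoc]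
    _ = y * (z * (x * (y * z))) := s0
    _ = y * (x * (y * (z * (x * y)))) := s1
    _ = y * (x * (z * (x * (y * (z * x))))) := s2
    _ = x * (z * (x * (y * (x * (z * (x * (z * x))))))) := s3
    _ = x * (y * (x * (z * (x * (z * (x * (y * (x * (z * x))))))))) := s4
    _ = z * (x * (y * (x * (z * (x * z))))) := s5
    _ = y * (x * (z * (x * (y * (x * z))))) := s6
    _ = x * (y * (x * (z * x))) := s7
    _ = x * y * x * z * x := by simp only [mul_assoc]
end

section
/- In any semigroup satisfying the identity xyx = yxy (for all x, y), the identity xyzx = x·xyzx holds for all x, y, z, and consequently xyzx = xⁿyzxᵐ for all n, m ≥ 1. -/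
/-- `spow x n` is the `n`-th power of `x` in a semigroup (with the junk value
`spow x 0 = x`), so that `spow x 1 = x`, `spow x (n+1) = spow x n * x` for `n ≥ 1`. -/
def spow {S : Type*} [Semigroup S] (x : S) : ℕ → S
  | 0 => x
  | 1 => x
  | n + 2 => spow x (n + 1) * x

lemma key_aux {S : Type*} [Semigroup S]
    (h : ∀ x y : S, x * y * x = y * x * y) (x y z : S) :
    x * y * z * x = x * (x * y * z * x) := by
  calc x * y * z * x = x * (y*z) * x := by rw [mul_assoc x y z]
    _ = (y*z) * x * (y*z) := h x (y*z)
    _ = (y * (z*x) * y) * z := by simp only [mul_assoc]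
    _ = ((z*x) * y * (z*x)) * z := by rw [h y (z*x)]
    _ = z * (x*y*z*x) * z := by simp only [mul_assoc]
    _ = (x*y*z*x) * z * (x*y*z*x) := h z (x*y*z*x)
    _ = (x*y) * ((z*x*z) * (x*y*z*x)) := by simp only [mul_assoc]
    _ = (x*y) * ((x*z*x) * (x*y*z*x)) := by rw [h z x]
    _ = (x*y*x) * ((z*x) * (x*y) * (z*x)) := by simp only [mul_assoc]
    _ = (x*y*x) * ((x*y) * (z*x) * (x*y)) := by rw [h (z*x) (x*y)]
    _ = (x*y) * ((x*x*y) * z * (x*x*y)) := by simp only [mul_assoc]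
    _ = (x*y) * (z * (x*x*y) * z) := by rw [h (x*x*y) z]
    _ = (x*y*z) * x * (x*y*z) := by simp only [mul_assoc]
    _ = x * (x*y*z) * x := h (x*y*z) x
    _ = x * (x*y*z*x) := by simp only [mul_assoc]

/-- In any semigroup satisfying `xyx = yxy`, one has `xyzx = x(xyzx)`, and consequently
`xyzx = xⁿyzxᵐ` for all `n, m ≥ 1`. -/
theorem bump_up_bracket {S : Type*} [Semigroup S]
    (h : ∀ x y : S, x * y * x = y * x * y) (x y z : S) :
    (x * y * z * x = x * (x * y * z * x)) ∧
      ∀ n m : ℕ, 1 ≤ n → 1 ≤ m → x * y * z * x = spow x n * y * z * spow x m := by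
  have key : ∀ a b : S, x * a * b * x = x * (x * a * b * x) := key_aux h x
  -- dual version via the opposite semigroup
  have h' : ∀ a b : Sᵐᵒᵖ, a * b * a = b * a * b := fun a b =>
    MulOpposite.unop_injective (by simpa [mul_assoc] using h a.unop b.unop)
  have key' : ∀ a b : S, x * a * b * x = (x * a * b * x) * x := by
    intro a b
    have h2 := congrArg MulOpposite.unop
      (key_aux h' (MulOpposite.op x) (MulOpposite.op b) (MulOpposite.op a))
    simp only [MulOpposite.unop_mul, MulOpposite.unop_op] at h2
    simp only [mul_assoc] at h2 ⊢
    exact h2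
  refine ⟨key y z, ?_⟩
  have spow_succ : ∀ k : ℕ, 1 ≤ k → spow x (k + 1) = spow x k * x := by
    intro k hk
    match k, hk with
    | k + 1, _ => rfl
  have spow_succ' : ∀ k : ℕ, 1 ≤ k → spow x (k + 1) = x * spow x k := by
    intro k hk
    induction k, hk using Nat.le_induction with
    | base => rfl
    | succ k hk ih =>
      rw [spow_succ (k+1) (by omega), ih, mul_assoc, ← spow_succ k hk, ih]
  have B : ∀ m : ℕ, 1 ≤ m → x * y * z * x = x * y * z * spow x m := by
    intro m hm
    induction m, hm using Nat.le_induction with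
    | base => rfl
    | succ m hm ih =>
      rw [spow_succ m hm, ← mul_assoc, ← ih]
      exact key' y z
  intro n m hn hm
  have key2 : x * y * z * spow x m = x * (x * y * z * spow x m) := by
    rw [← B m hm]; exact key y z
  rw [B m hm]
  induction n, hn using Nat.le_induction with
  | base => rfl
  | succ n hn ih =>
    rw [spow_succ' n hn, key2, ih]
    simp only [mul_assoc]
end

section
/- In any semigroup satisfying the identity xyx = yxy (for all x, y), the identity xyzx = xzyx holds for all x, y, z (the inner letters commute inside a bracket). -/
/-- In any semigroup satisfying `xyx = yxy`, the identity `xyzx = xzyx` holds. -/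
theorem inside_commuting {S : Type*} [Semigroup S]
    (h : ∀ x y : S, x * y * x = y * x * y) (x y z : S) :
    x * y * z * x = x * z * y * x := by
  have h' : ∀ a b : S, a * (b * a) = b * (a * b) := by
    intro a b; simpa [mul_assoc] using h a b
  have e1 := h' x (y * z)
  have e2 := congrArg (· * z) (h' y (z * x))
  have e4 := h' (z * x) (y * x)
  have e6 := congrArg (· * y) (h' (y * x) z)
  have e7 := h' (z * y) x
  simp only [mul_assoc] at e1 e2 e4 e6 e7 ⊢
  rw [e1, e2, h' z x, e4, h' x y, e6, e7]
end

section
/- In any semigroup satisfying the identity xyx = yxy (for all x, y), the identity xyxy = xyyx holds for all x, y. -/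
/-- In any semigroup satisfying `xyx = yxy`, the identity `xyxy = xyyx` holds. -/
theorem leapfrog_basic {S : Type*} [Semigroup S]
    (h : ∀ x y : S, x * y * x = y * x * y) (x y : S) :
    x * y * x * y = x * y * y * x := by
  have h1 := h x y
  have h2 := h x (x * y)
  have h3 := h (y * y) x
  calc x * y * x * y = x * (y * x * y) := by simp only [mul_assoc]
    _ = x * (x * y * x) := by rw [← h1]
    _ = x * (x * y) * x := by simp only [mul_assoc]
    _ = (x * y) * x * (x * y) := h2
    _ = (x * y * x) * (x * y) := by simp only [mul_assoc]
    _ = (y * x * y) * (x * y) := by rw [h1]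
    _ = y * (x * y * x) * y := by simp only [mul_assoc]
    _ = y * (y * x * y) * y := by rw [h1]
    _ = (y * y) * x * (y * y) := by simp only [mul_assoc]
    _ = x * (y * y) * x := h3
    _ = x * y * y * x := by simp only [mul_assoc]
end
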